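/- For every KAT expression x, atom α, and letter p, the equality between the Brzozowski derivative and the sum of the Antimirov partial derivatives is provable in KAT: δ_{α,p}(x) = Σ δ'_{α,p}(x). -/
import Mathlib


/-- Boolean expressions over primitive tests `T`. -/
inductive BExp (T : Type) : Type
  | var : T → BExp T
  | and : BExp T → BExp T → BExp T
  | or : BExp T → BExp T → BExp T
  | not : BExp T → BExp T
  | top : BExp T
  | bot : BExp T

/-- An atom assigns a Boolean value to each primitive test. -/
def Atom (T : Type) := T → Bool

/-- Satisfaction of a Boolean expression by an atom. -/
def BExp.sat {T : Type} (α : Atom T) : BExp T → Bool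
  | .var t => α t
  | .and a b => a.sat α && b.sat α
  | .or a b => a.sat α || b.sat α
  | .not a => !a.sat α
  | .top => true
  | .bot => false

/-- KAT expressions over letters `A` and primitive tests `T`. -/
inductive KATExp (T A : Type) : Type
  | letter : A → KATExp T A
  | test : BExp T → KATExp T A
  | zero : KATExp T A
  | one : KATExp T A
  | plus : KATExp T A → KATExp T A → KATExp T A
  | mul : KATExp T A → KATExp T A → KATExp T A
  | star : KATExp T A → KATExp T A

/-- `ε_α(x)`: does `x` accept the single atom `α`? -/
def eps {T A : Type} (α : Atom T) : KATExp T A → Bool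
  | .letter _ => false
  | .test a => a.sat α
  | .zero => false
  | .one => true
  | .plus x y => eps α x || eps α y
  | .mul x y => eps α x && eps α y
  | .star _ => true

/-- The Brzozowski derivative `δ_{α,p}` of a KAT expression. -/
def katDeriv {T A : Type} [DecidableEq A] (α : Atom T) (p : A) :
    KATExp T A → KATExp T A
  | .letter q => if p = q then .one else .zero
  | .test _ => .zero
  | .zero => .zero
  | .one => .zero
  | .plus x y => .plus (katDeriv α p x) (katDeriv α p y)
  | .mul x y =>
      if eps α x then .plus (.mul (katDeriv α p x) y) (katDeriv α p y)
      else .mul (katDeriv α p x) y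
  | .star x => .mul (katDeriv α p x) (.star x)

/-- The Antimirov partial derivative `δ'_{α,p}` of a KAT expression,
returning a finite set (list) of expressions. -/
def katPDeriv {T A : Type} [DecidableEq A] (α : Atom T) (p : A) :
    KATExp T A → List (KATExp T A)
  | .letter q => if p = q then [.one] else []
  | .test _ => []
  | .zero => []
  | .one => []
  | .plus x y => katPDeriv α p x ++ katPDeriv α p y
  | .mul x y =>
      if eps α x then (katPDeriv α p x).map (KATExp.mul · y) ++ katPDeriv α p y
      else (katPDeriv α p x).map (KATExp.mul · y)
  | .star x => (katPDeriv α p x).map (KATExp.mul · (.star x))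

/-- Evaluation of a Boolean expression in a Boolean algebra. -/
def BExp.eval {T : Type} {B : Type*} [BooleanAlgebra B] (θ : T → B) :
    BExp T → B
  | .var t => θ t
  | .and a b => a.eval θ ⊓ b.eval θ
  | .or a b => a.eval θ ⊔ b.eval θ
  | .not a => (a.eval θ)ᶜ
  | .top => ⊤
  | .bot => ⊥

/-- Evaluation of a KAT expression in a Kleene algebra with tests
`(X, B, f)`, under interpretations `σ` of the letters and `θ` of the
primitive tests. -/
def KATExp.eval {T A : Type} {X B : Type*} [KleeneAlgebra X]
    [BooleanAlgebra B] (f : B → X) (σ : A → X) (θ : T → B) :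
    KATExp T A → X
  | .letter p => σ p
  | .test a => f (a.eval θ)
  | .zero => 0
  | .one => 1
  | .plus x y => x.eval f σ θ + y.eval f σ θ
  | .mul x y => x.eval f σ θ * y.eval f σ θ
  | .star x => KStar.kstar (x.eval f σ θ)

/-- For every KAT expression, atom and letter, the equality between the
Brzozowski derivative and the sum of the Antimirov partial derivatives is
provable in KAT, i.e. holds in every Kleene algebra with tests under every
interpretation. -/
theorem katDeriv_eq_sum_pDeriv {T A : Type} [DecidableEq A]
    (α : Atom T) (p : A) (x : KATExp T A) :
    ∀ (X B : Type) [KleeneAlgebra X] [BooleanAlgebra B] (f : B → X),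
      (∀ a b : B, f (a ⊓ b) = f a * f b) →
      (∀ a b : B, f (a ⊔ b) = f a + f b) →
      f ⊤ = 1 → f ⊥ = 0 →
      ∀ (σ : A → X) (θ : T → B),
        (katDeriv α p x).eval f σ θ
          = ((katPDeriv α p x).map (KATExp.eval f σ θ)).sum := by
  intro X B _ _ f _ _ _ _ σ θ
  induction x with
  | letter q =>
    by_cases h : p = q <;> simp [katDeriv, katPDeriv, h, KATExp.eval]
  | test a => simp [katDeriv, katPDeriv, KATExp.eval]
  | zero => simp [katDeriv, katPDeriv, KATExp.eval]
  | one => simp [katDeriv, katPDeriv, KATExp.eval]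
  | plus x y ihx ihy => simp [katDeriv, katPDeriv, KATExp.eval, ihx, ihy]
  | mul x y ihx ihy =>
    by_cases h : eps α x <;>
      simp [katDeriv, katPDeriv, h, KATExp.eval, ihx, ihy,
        List.map_map, Function.comp_def, ← List.sum_map_mul_right]
  | star x ihx =>
    simp [katDeriv, katPDeriv, KATExp.eval, ihx,
      List.map_map, Function.comp_def, ← List.sum_map_mul_right]
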